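/- arXiv:2206.00353 — 2 statements merged into one kernel-verified Lean document; each statement's English description precedes it below -/
import Mathlib

section
/- Let $(X,\mathcal{B},\mu,f,T_f)$ be a dissipative composition dynamical system of bounded distortion generated by $W$. Then $T_f$ is positively expansive if and only if $\sup_{n\in\mathbb{N}}\mu(f^{-n}(W))=\infty$. -/
open MeasureTheory Filter Set ENNReal

/-!
Testing expansivity on `1_W` gives `‖1_W ∘ fⁿ‖_p ^ p = μ(f⁻ⁿ W)`, which settles one direction.

Conversely, a nonzero `φ` has `‖φ‖ ≥ δ > 0` on a set `S` of positive measure, and `S` meets some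
`fᵏ W` in a set `fᵏ B` with `B ⊆ W`, `μ B > 0`. Chebyshev gives
`δ ^ p · μ(f^(k-n) B) ≤ ‖φ ∘ fⁿ‖_p ^ p`, and bounded distortion makes `μ(f^(k-n) B)` comparable to
`μ(f^(k-n) W)`. The supremum over `n` of the latter is infinite: for `k ≥ 0` it runs over all values
`μ(f⁻ᵐ W)`, for `k < 0` over a tail of them, and these are finite since `μ(f⁻¹ B) ≤ c μ B`.
-/

lemma ENNReal.iSup_rpow_eq_top_iff {ι : Type*} {a : ι → ℝ≥0∞} {t : ℝ} (ht : 0 < t) :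
    ⨆ i, a i ^ t = ⊤ ↔ ⨆ i, a i = ⊤ := by
  have h := (orderIsoRpow t ht).map_iSup a
  simp only [orderIsoRpow_apply] at h
  rw [← h]
  exact rpow_eq_top_iff_of_pos ht

lemma ENNReal.iSup_add_eq_top_of_ne_top {a : ℕ → ℝ≥0∞} (ha : ∀ n, a n ≠ ⊤) (h : ⨆ n, a n = ⊤)
    (m : ℕ) : ⨆ n, a (n + m) = ⊤ := by
  by_contra htail
  have hle : ∀ n, a n ≤ (∑ i ∈ Finset.range m, a i) + ⨆ j, a (j + m) := by
    intro n
    rcases lt_or_ge n m with hn | hn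
    · exact le_add_right (Finset.single_le_sum (fun _ _ => bot_le) (Finset.mem_range.2 hn))
    · exact le_add_left (le_iSup_of_le (n - m) (by rw [Nat.sub_add_cancel hn]))
  have htop := iSup_le hle
  rw [h, top_le_iff] at htop
  exact add_ne_top.2 ⟨sum_ne_top.2 fun i _ => ha i, htail⟩ htop

lemma ENNReal.iSup_eq_top_of_mul_le {ι : Type*} {a b : ι → ℝ≥0∞} {α β : ℝ≥0∞} (hα : α ≠ 0)
    (hβ : β ≠ ⊤) (h : ∀ i, α * b i ≤ a i * β) (hb : ⨆ i, b i = ⊤) : ⨆ i, a i = ⊤ := by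
  have htop : α * ⨆ i, b i ≤ (⨆ i, a i) * β := by
    rw [mul_iSup, iSup_mul]
    exact iSup_mono h
  rw [hb, mul_top hα, top_le_iff] at htop
  by_contra ha
  exact mul_ne_top ha hβ htop

lemma ENNReal.iSup_sub_natCast_eq_top {a : ℤ → ℝ≥0∞} (ha : ∀ n : ℕ, a (-n) ≠ ⊤)
    (h : ⨆ n : ℕ, a (-n) = ⊤) (k : ℤ) : ⨆ n : ℕ, a (k - n) = ⊤ := by
  obtain ⟨m, rfl | rfl⟩ := Int.eq_nat_or_neg k
  · refine top_unique (h ▸ iSup_le fun n => le_iSup_of_le (n + m) ?_)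
    rw [Nat.cast_add, sub_add_cancel_right]
  · have := iSup_add_eq_top_of_ne_top (a := fun n => a (-n)) ha h m
    simpa [neg_sub_left, add_comm] using this

section QuasiInvariance

variable {X : Type*} [MeasurableSpace X] {μ : Measure X} {f : X → X} {c : ℝ≥0∞}

lemma measure_preimage_iterate_le (hf : Measurable f)
    (hb : ∀ B, MeasurableSet B → μ (f ⁻¹' B) ≤ c * μ B) {B : Set X} (hB : MeasurableSet B)
    (n : ℕ) : μ (f^[n] ⁻¹' B) ≤ c ^ n * μ B := by
  induction n with
  | zero => simp
  | succ n ih =>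
    rw [Function.iterate_succ, preimage_comp, pow_succ', mul_assoc]
    calc μ (f ⁻¹' (f^[n] ⁻¹' B)) ≤ c * μ (f^[n] ⁻¹' B) := hb _ (hf.iterate n hB)
      _ ≤ c * (c ^ n * μ B) := by gcongr

lemma quasiMeasurePreserving_of_measure_preimage_le (hf : Measurable f)
    (hb : ∀ B, MeasurableSet B → μ (f ⁻¹' B) ≤ c * μ B) :
    Measure.QuasiMeasurePreserving f μ μ :=
  ⟨hf, Measure.AbsolutelyContinuous.mk fun s hs hs0 => by
    rw [Measure.map_apply hf hs]
    exact nonpos_iff_eq_zero.1 ((hb s hs).trans_eq (by simp [hs0]))⟩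

end QuasiInvariance

section LpNorm

variable {X E : Type*} [MeasurableSpace X] {μ : Measure X} [NormedAddCommGroup E] {p : ℝ≥0∞}

lemma exists_measure_le_enorm_ne_zero {φ : X → E} (hφ : ¬ φ =ᵐ[μ] 0) :
    ∃ δ : ℝ≥0∞, δ ≠ 0 ∧ μ {x | δ ≤ ‖φ x‖ₑ} ≠ 0 := by
  have hsupp : μ (⋃ n : ℕ, {x | (n : ℝ≥0∞)⁻¹ ≤ ‖φ x‖ₑ}) ≠ 0 := fun h0 =>
    hφ <| ae_iff.2 <| measure_mono_null (fun x hx => by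
      obtain ⟨n, hn⟩ := exists_inv_nat_lt (enorm_ne_zero.2 hx)
      exact mem_iUnion.2 ⟨n, hn.le⟩) h0
  obtain ⟨n, hn⟩ := exists_measure_pos_of_not_measure_iUnion_null hsupp
  exact ⟨_, ENNReal.inv_ne_zero.2 (natCast_ne_top n), hn.ne'⟩

lemma eLpNorm_indicator_const_comp (hp0 : p ≠ 0) (hpT : p ≠ ⊤) {g : X → X} (hg : Measurable g)
    {W : Set X} (hW : MeasurableSet W) (a : E) :
    eLpNorm ((W.indicator fun _ => a) ∘ g) p μ = ‖a‖ₑ * μ (g ⁻¹' W) ^ (1 / p.toReal) := by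
  rw [← eLpNorm_indicator_const (hg hW) hp0 hpT]
  rfl

lemma iSup_eLpNorm_comp_eq_top {g : ℕ → X → X}
    (hg : ∀ n, Measure.QuasiMeasurePreserving (g n) μ μ) (hp0 : p ≠ 0) (hpT : p ≠ ⊤)
    (hexp : ∀ S, MeasurableSet S → μ S ≠ 0 → ⨆ n, μ (g n ⁻¹' S) = ⊤)
    {φ : X → E} (hφm : AEStronglyMeasurable φ μ) (hφ : ¬ φ =ᵐ[μ] 0) :
    ⨆ n, eLpNorm (φ ∘ g n) p μ = ⊤ := by
  set ψ := hφm.mk φ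
  obtain ⟨δ, hδ, hS0⟩ := exists_measure_le_enorm_ne_zero (μ := μ) (φ := ψ)
    fun h => hφ (hφm.ae_eq_mk.trans h)
  have hSm : MeasurableSet {x | δ ≤ ‖ψ x‖ₑ} :=
    measurableSet_le measurable_const hφm.stronglyMeasurable_mk.enorm
  have hpt := toReal_pos hp0 hpT
  have hcheb : ∀ n, δ ^ p.toReal * μ (g n ⁻¹' {x | δ ≤ ‖ψ x‖ₑ}) ≤
      eLpNorm (φ ∘ g n) p μ ^ p.toReal := fun n => by
    rw [eLpNorm_congr_ae ((hg n).ae_eq hφm.ae_eq_mk)]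
    exact mul_meas_ge_le_pow_eLpNorm' μ hp0 hpT
      (hφm.stronglyMeasurable_mk.comp_measurable (hg n).measurable).aestronglyMeasurable δ
  rw [← iSup_rpow_eq_top_iff hpt]
  exact iSup_eq_top_of_mul_le (by simp [hδ, hpt.le]) one_ne_top
    (fun n => (hcheb n).trans_eq (mul_one _).symm) (hexp _ hSm hS0)

end LpNorm

lemma Equiv.Perm.image_zpow_neg_natCast {X : Type*} (e : Equiv.Perm X) (n : ℕ) (s : Set X) :
    ⇑(e ^ (-n : ℤ)) '' s = (⇑e)^[n] ⁻¹' s := by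
  rw [zpow_neg, zpow_natCast, Equiv.Perm.inv_def, Equiv.image_symm_eq_preimage, Equiv.Perm.coe_pow]

section Dissipative

variable {X : Type*} [MeasurableSpace X] {μ : Measure X} {e : Equiv.Perm X} {c K : ℝ≥0∞}
  {W : Set X}

lemma Equiv.Perm.measurable_zpow (he : Measurable e) (he' : Measurable e.symm) :
    ∀ j : ℤ, Measurable ⇑(e ^ j)
  | (n : ℕ) => by simpa [Equiv.Perm.coe_pow] using he.iterate n
  | .negSucc n => by
    simpa [zpow_negSucc, ← inv_pow, Equiv.Perm.coe_pow, Equiv.Perm.inv_def]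
      using he'.iterate (n + 1)

lemma iSup_measure_image_zpow_sub_eq_top (he : Measurable e) (hcT : c ≠ ⊤)
    (hb : ∀ B, MeasurableSet B → μ (⇑e ⁻¹' B) ≤ c * μ B) (hWm : MeasurableSet W)
    (hWfin : μ W ≠ ⊤) (hsup : ⨆ n : ℕ, μ (⇑(e ^ (n : ℤ)) ⁻¹' W) = ⊤) (k : ℤ) :
    ⨆ n : ℕ, μ (⇑(e ^ (k - n)) '' W) = ⊤ := by
  refine iSup_sub_natCast_eq_top (a := fun j => μ (⇑(e ^ j) '' W)) (fun n => ?_) ?_ k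
  · rw [Equiv.Perm.image_zpow_neg_natCast]
    exact ne_top_of_le_ne_top (mul_ne_top (pow_ne_top hcT) hWfin)
      (measure_preimage_iterate_le he hb hWm n)
  · simpa only [Equiv.Perm.image_zpow_neg_natCast, zpow_natCast, Equiv.Perm.coe_pow] using hsup

theorem iSup_measure_preimage_zpow_eq_top (he : Measurable e) (he' : Measurable e.symm)
    (hcT : c ≠ ⊤) (hb : ∀ B, MeasurableSet B → μ (⇑e ⁻¹' B) ≤ c * μ B)
    (hWm : MeasurableSet W) (hW0 : 0 < μ W) (hWfin : μ W ≠ ⊤)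
    (hcover : ⋃ k : ℤ, ⇑(e ^ k) '' W = univ) (hKT : K ≠ ⊤)
    (hbd : ∀ (k : ℤ) (B : Set X), MeasurableSet B → B ⊆ W →
        K⁻¹ * (μ (⇑(e ^ k) '' W) * μ B) ≤ μ (⇑(e ^ k) '' B) * μ W ∧
        μ (⇑(e ^ k) '' B) * μ W ≤ K * (μ (⇑(e ^ k) '' W) * μ B))
    (hsup : ⨆ n : ℕ, μ (⇑(e ^ (n : ℤ)) ⁻¹' W) = ⊤) {S : Set X} (hSm : MeasurableSet S)
    (hS0 : μ S ≠ 0) : ⨆ n : ℕ, μ (⇑(e ^ (n : ℤ)) ⁻¹' S) = ⊤ := by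
  obtain ⟨k, hk⟩ : ∃ k : ℤ, 0 < μ (S ∩ ⇑(e ^ k) '' W) :=
    exists_measure_pos_of_not_measure_iUnion_null (by rwa [← inter_iUnion, hcover, inter_univ])
  set B := ⇑(e ^ k) ⁻¹' S ∩ W
  have hBm : MeasurableSet B := (Equiv.Perm.measurable_zpow he he' k hSm).inter hWm
  have hBW : B ⊆ W := inter_subset_right
  have hkB : ⇑(e ^ k) '' B = S ∩ ⇑(e ^ k) '' W := by
    rw [image_inter (e ^ k).injective, image_preimage_eq _ (e ^ k).surjective]
  have hB0 : μ B ≠ 0 := fun h0 => by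
    have h := (hbd k B hBm hBW).2
    rw [h0, mul_zero, mul_zero, nonpos_iff_eq_zero, mul_eq_zero, hkB] at h
    exact h.elim hk.ne' hW0.ne'
  have hBsup : ⨆ n : ℕ, μ (⇑(e ^ (k - n)) '' B) = ⊤ :=
    iSup_eq_top_of_mul_le (mul_ne_zero (ENNReal.inv_ne_zero.2 hKT) hB0) hWfin
      (fun n => by rw [mul_assoc, mul_comm (μ B)]; exact (hbd _ B hBm hBW).1)
      (iSup_measure_image_zpow_sub_eq_top he hcT hb hWm hWfin hsup k)
  refine top_unique (hBsup ▸ iSup_mono fun n => measure_mono ?_)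
  rintro _ ⟨x, hx, rfl⟩
  show (e ^ (n : ℤ)) ((e ^ (k - n)) x) ∈ S
  rw [← Equiv.Perm.mul_apply, ← zpow_add, add_sub_cancel]
  exact hx.1

end Dissipative

theorem stmt_6_general
    {X : Type*} [MeasurableSpace X] (μ : MeasureTheory.Measure X)
    (p : ℝ≥0∞) (hp1 : 1 ≤ p) (hpT : p ≠ ⊤)
    (e : Equiv.Perm X) (he : Measurable e) (he' : Measurable e.symm)
    (c : ℝ≥0∞) (hcT : c ≠ ⊤)
    (hb : ∀ B : Set X, MeasurableSet B → μ (⇑e ⁻¹' B) ≤ c * μ B)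
    (W : Set X) (hWm : MeasurableSet W) (hW0 : 0 < μ W) (hWfin : μ W ≠ ⊤)
    (hcover : (⋃ k : ℤ, ⇑(e ^ k) '' W) = Set.univ)
    (K : ℝ≥0∞) (hKT : K ≠ ⊤)
    (hbd : ∀ (k : ℤ) (B : Set X), MeasurableSet B → B ⊆ W →
        K⁻¹ * (μ (⇑(e ^ k) '' W) * μ B) ≤ μ (⇑(e ^ k) '' B) * μ W ∧
        μ (⇑(e ^ k) '' B) * μ W ≤ K * (μ (⇑(e ^ k) '' W) * μ B)) :
    (∀ φ : X → ℂ, MemLp φ p μ → ¬ φ =ᵐ[μ] 0 →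
        (⨆ n : ℕ, eLpNorm (φ ∘ ⇑(e ^ (n : ℤ))) p μ) = ⊤) ↔
    (⨆ n : ℕ, μ (⇑(e ^ (n : ℤ)) ⁻¹' W)) = ⊤ := by
  have hp0 : p ≠ 0 := (zero_lt_one.trans_le hp1).ne'
  refine ⟨fun hexp => ?_, fun hsup φ hφ hφ0 => ?_⟩
  · have hW : ¬ (W.indicator fun _ => (1 : ℂ)) =ᵐ[μ] 0 := fun h =>
      hW0.ne' (measure_mono_null (fun x hx => by simp [hx]) (ae_iff.1 h))
    have hind := hexp _ (memLp_indicator_const p hWm 1 (Or.inr hWfin)) hW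
    simp only [eLpNorm_indicator_const_comp hp0 hpT (Equiv.Perm.measurable_zpow he he' _) hWm,
      enorm_one, one_mul] at hind
    exact (iSup_rpow_eq_top_iff (one_div_pos.2 (toReal_pos hp0 hpT))).1 hind
  · have hqmp := quasiMeasurePreserving_of_measure_preimage_le he hb
    refine iSup_eLpNorm_comp_eq_top (fun n => ?_) hp0 hpT
      (fun S hS hS0 => iSup_measure_preimage_zpow_eq_top he he' hcT hb hWm hW0 hWfin hcover hKT
        hbd hsup hS hS0) hφ.1 hφ0
    rw [zpow_natCast, Equiv.Perm.coe_pow]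
    exact hqmp.iterate n

/-- Theorem ED(1): for a dissipative composition dynamical system of bounded
distortion generated by `W`, `T_f` is positively expansive iff
`sup_{n∈ℕ} μ(f⁻ⁿ(W)) = ∞`. -/
theorem stmt_6
    {X : Type*} [MeasurableSpace X] (μ : MeasureTheory.Measure X) [MeasureTheory.SigmaFinite μ]
    (p : ℝ≥0∞) (hp1 : 1 ≤ p) (hpT : p ≠ ⊤)
    (e : Equiv.Perm X) (he : Measurable e) (he' : Measurable e.symm)
    (c c' : ℝ≥0∞) (hc : 0 < c) (hcT : c ≠ ⊤) (hc' : 0 < c') (hc'T : c' ≠ ⊤)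
    (hb : ∀ B : Set X, MeasurableSet B → μ (⇑e ⁻¹' B) ≤ c * μ B)
    (hb' : ∀ B : Set X, MeasurableSet B → μ (⇑e '' B) ≤ c' * μ B)
    (W : Set X) (hWm : MeasurableSet W) (hW0 : 0 < μ W) (hWfin : μ W ≠ ⊤)
    (hcover : (⋃ k : ℤ, ⇑(e ^ k) '' W) = Set.univ)
    (hdisj : Pairwise (fun k l : ℤ => Disjoint (⇑(e ^ k) '' W) (⇑(e ^ l) '' W)))
    (K : ℝ≥0∞) (hK0 : 0 < K) (hKT : K ≠ ⊤)
    (hbd : ∀ (k : ℤ) (B : Set X), MeasurableSet B → B ⊆ W →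
        K⁻¹ * (μ (⇑(e ^ k) '' W) * μ B) ≤ μ (⇑(e ^ k) '' B) * μ W ∧
        μ (⇑(e ^ k) '' B) * μ W ≤ K * (μ (⇑(e ^ k) '' W) * μ B)) :
    (∀ φ : X → ℂ, MemLp φ p μ → ¬ φ =ᵐ[μ] 0 →
        (⨆ n : ℕ, eLpNorm (φ ∘ ⇑(e ^ (n : ℤ))) p μ) = ⊤) ↔
    (⨆ n : ℕ, μ (⇑(e ^ (n : ℤ)) ⁻¹' W)) = ⊤ :=
  stmt_6_general μ p hp1 hpT e he he' c hcT hb W hWm hW0 hWfin hcover K hKT hbd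
end

section
/- Let $(X,\mathcal{B},\mu,f,T_f)$ be a dissipative composition dynamical system of bounded distortion generated by $W$, with $T_f$ invertible on $L^p(X)$. Then $T_f$ is uniformly expansive if and only if one of the following holds: (UE1) $\lim_{n\to\infty}\inf_{k\in\mathbb{Z}}\frac{\mu(f^{k+n}(W))}{\mu(f^k(W))}=\infty$; (UE2) $\lim_{n\to\infty}\inf_{k\in\mathbb{Z}}\frac{\mu(f^{k-n}(W))}{\mu(f^k(W))}=\infty$; (UE3) $\lim_{n\to\infty}\inf_{k\in\mathbb{N}}\frac{\mu(f^{k+n}(W))}{\mu(f^k(W))}=\infty$ and $\lim_{n\to\infty}\inf_{k\le 0}\frac{\mu(f^{k-n}(W))}{\mu(f^k(W))}=\infty$. -/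
/-!
Write `w k = μ (e ^ k '' W)` for the measure of the `k`-th block. By bounded distortion,
composing with `e ^ m` multiplies the `L^p`-mass that `φ` carries on the block `e ^ j '' W` by
`w (j - m) / w j`, up to a factor `K²`; normalized indicators of single blocks show that this
factor is attained. Hence `T_f` is uniformly expansive iff `ℤ` splits into a set `Z` on which
`w (k - n) / w k → ∞` uniformly and its complement on which `w (k + n) / w k → ∞` uniformly.
For such a splitting every `a ∈ Z` lies below `k + N` for all `k ∉ Z`, and since consecutive
ratios of `w` are bounded, finitely many indices can be moved freely between the two sides.
What remains are the cases `Z = ∅`, `Z = ℤ` and `Z = {k ≤ 0}`, i.e. UE1, UE2 and UE3.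
-/

open MeasureTheory Filter Set ENNReal Topology

theorem ENNReal.tendsto_nhds_top_iff_le {α : Type*} {l : Filter α} {f : α → ℝ≥0∞} :
    Tendsto f l (𝓝 ∞) ↔ ∀ b ≠ ∞, ∀ᶠ a in l, b ≤ f a := by
  rw [tendsto_nhds_top_iff_nnreal]
  refine ⟨fun h b hb => ?_, fun h b => ?_⟩
  · lift b to NNReal using hb
    exact (h b).mono fun _ => le_of_lt
  · exact (h (b + 1) (by simp)).mono fun _ => (lt_add_right coe_ne_top one_ne_zero).trans_le

def ExpandsUniformlyOn (w : ℤ → ℝ≥0∞) (d : ℤ) (S : Set ℤ) : Prop :=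
  ∀ b ≠ ∞, ∀ᶠ n : ℕ in atTop, ∀ k ∈ S, b * w k ≤ w (k + d * n)

def HasBoundedSteps (w : ℤ → ℝ≥0∞) (C : ℝ≥0∞) : Prop :=
  ∀ k, w (k + 1) ≤ C * w k ∧ w k ≤ C * w (k + 1)

namespace HasBoundedSteps

variable {w : ℤ → ℝ≥0∞} {C : ℝ≥0∞}

theorem le_pow_mul_add (hw : HasBoundedSteps w C) (k : ℤ) (t : ℕ) :
    w (k + t) ≤ C ^ t * w k ∧ w k ≤ C ^ t * w (k + t) := by
  induction t with
  | zero => simp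
  | succ t ih =>
    obtain ⟨hup, hdown⟩ := hw (k + t)
    rw [Nat.cast_succ, ← add_assoc, pow_succ']
    constructor
    · calc w (k + t + 1) ≤ C * w (k + t) := hup
        _ ≤ C * (C ^ t * w k) := by gcongr; exact ih.1
        _ = C * C ^ t * w k := (mul_assoc _ _ _).symm
    · calc w k ≤ C ^ t * w (k + t) := ih.2
        _ ≤ C ^ t * (C * w (k + t + 1)) := by gcongr
        _ = C * C ^ t * w (k + t + 1) := by ring

theorem le_pow_natAbs_mul (hw : HasBoundedSteps w C) (j k : ℤ) :
    w j ≤ C ^ (j - k).natAbs * w k := by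
  rcases le_total k j with h | h
  · obtain ⟨t, rfl⟩ := Int.le.dest h
    simpa using (hw.le_pow_mul_add k t).1
  · obtain ⟨t, rfl⟩ := Int.le.dest h
    simpa using (hw.le_pow_mul_add j t).2

theorem ne_zero (hw : HasBoundedSteps w C) {k₀ : ℤ} (h₀ : w k₀ ≠ 0) (k : ℤ) :
    w k ≠ 0 := fun hk =>
  h₀ <| le_antisymm ((hw.le_pow_natAbs_mul k₀ k).trans_eq (by rw [hk, mul_zero])) zero_le

theorem ne_top (hw : HasBoundedSteps w C) (hC : C ≠ ∞) {k₀ : ℤ} (h₀ : w k₀ ≠ ∞) (k : ℤ) :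
    w k ≠ ∞ :=
  ne_top_of_le_ne_top (mul_ne_top (pow_ne_top hC) h₀) (hw.le_pow_natAbs_mul k k₀)

end HasBoundedSteps

namespace ExpandsUniformlyOn

variable {w : ℤ → ℝ≥0∞} {d : ℤ} {S T : Set ℤ}

theorem mono (h : ExpandsUniformlyOn w d S) (hTS : T ⊆ S) : ExpandsUniformlyOn w d T :=
  fun b hb => (h b hb).mono fun _ hn k hk => hn k (hTS hk)

theorem union (hS : ExpandsUniformlyOn w d S) (hT : ExpandsUniformlyOn w d T) :
    ExpandsUniformlyOn w d (S ∪ T) :=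
  fun b hb => ((hS b hb).and (hT b hb)).mono fun _ hn k hk => hk.elim (hn.1 k) (hn.2 k)

theorem empty : ExpandsUniformlyOn w d ∅ :=
  fun _ _ => .of_forall fun _ _ hk => hk.elim

theorem singleton {C : ℝ≥0∞} (hw : HasBoundedSteps w C) (hC : C ≠ ∞) (hw₀ : ∀ k, w k ≠ 0)
    (h : ExpandsUniformlyOn w d S) {s : ℤ} (hs : s ∈ S) (k : ℤ) :
    ExpandsUniformlyOn w d {k} := by
  intro b hb
  set D := C ^ (k - s).natAbs
  have hC₀ : C ≠ 0 := by
    rintro rfl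
    exact hw₀ 0 (le_antisymm (by simpa using (hw 0).2) zero_le)
  have hD₀ : D ≠ 0 := pow_ne_zero _ hC₀
  have hDT : D ≠ ∞ := pow_ne_top hC
  filter_upwards [h (D * D * b) (by finiteness)] with n hn k' hk'
  rw [mem_singleton_iff.1 hk']
  have hshift : w (s + d * n) ≤ D * w (k + d * n) := by
    have := hw.le_pow_natAbs_mul (s + d * n) (k + d * n)
    rwa [show s + d * n - (k + d * n) = -(k - s) by ring, Int.natAbs_neg] at this
  refine (ENNReal.mul_le_mul_iff_right hD₀ hDT).1 ?_
  calc D * (b * w k) ≤ D * (b * (D * w s)) := by gcongr; exact hw.le_pow_natAbs_mul k s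
    _ = D * D * b * w s := by ring
    _ ≤ w (s + d * n) := hn s hs
    _ ≤ D * w (k + d * n) := hshift

theorem of_finite {C : ℝ≥0∞} (hw : HasBoundedSteps w C) (hC : C ≠ ∞) (hw₀ : ∀ k, w k ≠ 0)
    (h : ExpandsUniformlyOn w d S) {s : ℤ} (hs : s ∈ S) {F : Set ℤ} (hF : F.Finite) :
    ExpandsUniformlyOn w d F := fun b hb =>
  (eventually_all_finite hF).2 fun k _ =>
    (h.singleton hw hC hw₀ hs k b hb).mono fun _ hn => hn k rfl

end ExpandsUniformlyOn

theorem tendsto_iInf_div_iff_expandsUniformlyOn {w : ℤ → ℝ≥0∞} (hw₀ : ∀ k, w k ≠ 0)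
    (hw : ∀ k, w k ≠ ∞) (d : ℤ) (S : Set ℤ) :
    Tendsto (fun n : ℕ => ⨅ k ∈ S, w (k + d * n) / w k) atTop (𝓝 ∞) ↔
      ExpandsUniformlyOn w d S := by
  simp only [ENNReal.tendsto_nhds_top_iff_le, ExpandsUniformlyOn, le_iInf₂_iff,
    ENNReal.le_div_iff_mul_le (Or.inl (hw₀ _)) (Or.inl (hw _))]

theorem exists_lt_add_of_expandsUniformlyOn {w : ℤ → ℝ≥0∞} (hw₀ : ∀ k, w k ≠ 0)
    (hw : ∀ k, w k ≠ ∞) {A B : Set ℤ} (hA : ExpandsUniformlyOn w (-1) A)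
    (hB : ExpandsUniformlyOn w 1 B) : ∃ N : ℕ, ∀ a ∈ A, ∀ k ∈ B, a < k + N := by
  obtain ⟨N, hN⟩ := eventually_atTop.1 ((hA 2 ofNat_ne_top).and (hB 2 ofNat_ne_top))
  refine ⟨N, fun a ha k hk => ?_⟩
  by_contra! hka
  obtain ⟨n, rfl⟩ := Int.le.dest (show k ≤ k + N by omega |>.trans hka)
  have hback := (hN n (by omega)).1 _ ha
  have hfwd := (hN n (by omega)).2 k hk
  rw [add_assoc, neg_one_mul, add_neg_cancel, add_zero] at hback
  rw [one_mul] at hfwd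
  have : 4 * w (k + n) ≤ 1 * w (k + n) := by
    calc 4 * w (k + n) = 2 * (2 * w (k + n)) := by ring
      _ ≤ 2 * w k := by gcongr
      _ ≤ w (k + n) := hfwd
      _ = 1 * w (k + n) := (one_mul _).symm
  have := (ENNReal.mul_le_mul_iff_left (hw₀ _) (hw _)).1 this
  norm_num at this

theorem exists_expandsUniformlyOn_iff {w : ℤ → ℝ≥0∞} {C : ℝ≥0∞} (hw : HasBoundedSteps w C)
    (hC : C ≠ ∞) (hw₀ : ∀ k, w k ≠ 0) (hwT : ∀ k, w k ≠ ∞) :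
    (∃ Z : Set ℤ, ExpandsUniformlyOn w (-1) Z ∧ ExpandsUniformlyOn w 1 Zᶜ) ↔
      ExpandsUniformlyOn w 1 univ ∨ ExpandsUniformlyOn w (-1) univ ∨
        (ExpandsUniformlyOn w 1 (Ici 1) ∧ ExpandsUniformlyOn w (-1) (Iic 0)) := by
  constructor
  · rintro ⟨Z, hZ, hZc⟩
    obtain rfl | ⟨a₀, ha₀⟩ := Z.eq_empty_or_nonempty
    · exact Or.inl (by rwa [compl_empty] at hZc)
    obtain hZu | ⟨c₀, hc₀⟩ := Zᶜ.eq_empty_or_nonempty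
    · exact Or.inr (Or.inl (by rwa [compl_empty_iff.1 hZu] at hZ))
    obtain ⟨N, hN⟩ := exists_lt_add_of_expandsUniformlyOn hw₀ hwT hZ hZc
    refine Or.inr (Or.inr ⟨?_, ?_⟩)
    · refine (hZc.union (hZc.of_finite hw hC hw₀ hc₀ (finite_Icc 1 (c₀ + N)))).mono
        fun k hk => ?_
      by_cases hkZ : k ∈ Z
      · exact Or.inr ⟨hk, (hN k hkZ c₀ hc₀).le⟩
      · exact Or.inl hkZ
    · refine (hZ.union (hZ.of_finite hw hC hw₀ ha₀ (finite_Icc (a₀ - N) 0))).mono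
        fun k hk => ?_
      by_cases hkZ : k ∈ Z
      · exact Or.inl hkZ
      · exact Or.inr ⟨by linarith [hN a₀ ha₀ k hkZ], hk⟩
  · rintro (h | h | ⟨hpos, hnonpos⟩)
    · exact ⟨∅, .empty, by rwa [compl_empty]⟩
    · exact ⟨univ, h, by rw [compl_univ]; exact .empty⟩
    · refine ⟨Iic 0, hnonpos, hpos.mono fun k hk => ?_⟩
      simp only [mem_compl_iff, mem_Iic, not_le, mem_Ici] at hk ⊢
      omega

namespace Equiv.Perm

variable {α : Type*} {e : Perm α}

theorem image_zpow_eq_preimage (k : ℤ) (B : Set α) :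
    ⇑(e ^ k) '' B = ⇑(e ^ (-k)) ⁻¹' B := by
  rw [Equiv.image_eq_preimage_symm, ← coe_inv, zpow_neg]

theorem image_zpow_image_zpow (m j : ℤ) (B : Set α) :
    ⇑(e ^ m) '' (⇑(e ^ j) '' B) = ⇑(e ^ (m + j)) '' B := by
  rw [zpow_add, coe_mul, image_comp]

theorem preimage_zpow_image_zpow (m k : ℤ) (B : Set α) :
    ⇑(e ^ m) ⁻¹' (⇑(e ^ k) '' B) = ⇑(e ^ (k - m)) '' B := by
  rw [image_zpow_eq_preimage, image_zpow_eq_preimage, ← preimage_comp, ← coe_mul, ← zpow_add,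
    neg_sub, sub_eq_neg_add]

variable [MeasurableSpace α]

theorem measurable_zpow_s9 (he : Measurable e) (he' : Measurable e.symm) (k : ℤ) :
    Measurable ⇑(e ^ k) := by
  induction k using Int.induction_on with
  | zero => exact measurable_id
  | succ n ih => rw [zpow_add_one, coe_mul]; exact ih.comp he
  | pred n ih => rw [zpow_sub_one, coe_mul, coe_inv]; exact ih.comp he'

theorem measurableSet_image_zpow (he : Measurable e) (he' : Measurable e.symm) (k : ℤ)
    {B : Set α} (hB : MeasurableSet B) : MeasurableSet (⇑(e ^ k) '' B) := by
  rw [image_zpow_eq_preimage]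
  exact measurable_zpow_s9 he he' _ hB

theorem measurableEmbedding_zpow (he : Measurable e) (he' : Measurable e.symm) (k : ℤ) :
    MeasurableEmbedding ⇑(e ^ k) :=
  MeasurableEquiv.measurableEmbedding
    { toEquiv := e ^ k
      measurable_toFun := measurable_zpow_s9 he he' k
      measurable_invFun := by
        rw [← coe_inv, ← zpow_neg]
        exact measurable_zpow_s9 he he' (-k) }

end Equiv.Perm

open Equiv.Perm

section Dissipative

variable {X : Type*} [MeasurableSpace X] {μ : Measure X} {e : Equiv.Perm X} {W : Set X}
  {K : ℝ≥0∞}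

theorem hasBoundedSteps_measure_image_zpow (he : Measurable e) (he' : Measurable e.symm)
    (hW : MeasurableSet W) {c c' : ℝ≥0∞}
    (hb : ∀ B : Set X, MeasurableSet B → μ (⇑e ⁻¹' B) ≤ c * μ B)
    (hb' : ∀ B : Set X, MeasurableSet B → μ (⇑e '' B) ≤ c' * μ B) :
    HasBoundedSteps (fun k => μ (⇑(e ^ k) '' W)) (max c c') := by
  intro k
  have hstep : ⇑(e ^ (k + 1)) '' W = ⇑e '' (⇑(e ^ k) '' W) := by
    rw [add_comm, zpow_one_add, Equiv.Perm.coe_mul, image_comp]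
  have hk := measurableSet_image_zpow he he' k hW
  constructor
  · calc μ (⇑(e ^ (k + 1)) '' W) ≤ c' * μ (⇑(e ^ k) '' W) := hstep ▸ hb' _ hk
      _ ≤ max c c' * μ (⇑(e ^ k) '' W) := by gcongr; exact le_max_right c c'
  · calc μ (⇑(e ^ k) '' W) = μ (⇑e ⁻¹' (⇑(e ^ (k + 1)) '' W)) := by
          rw [hstep, Equiv.preimage_image]
      _ ≤ c * μ (⇑(e ^ (k + 1)) '' W) := hb _ (measurableSet_image_zpow he he' _ hW)
      _ ≤ max c c' * μ (⇑(e ^ (k + 1)) '' W) := by gcongr; exact le_max_left c c'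

structure IsDissipativeGenerator (μ : Measure X) (e : Equiv.Perm X) (W : Set X) : Prop where
  measurable : Measurable e
  measurable_symm : Measurable e.symm
  measurableSet : MeasurableSet W
  iUnion_image_zpow : ⋃ k : ℤ, ⇑(e ^ k) '' W = univ
  pairwise_disjoint : Pairwise fun k l : ℤ => Disjoint (⇑(e ^ k) '' W) (⇑(e ^ l) '' W)
  measure_ne_zero : ∀ k : ℤ, μ (⇑(e ^ k) '' W) ≠ 0
  measure_ne_top : ∀ k : ℤ, μ (⇑(e ^ k) '' W) ≠ ∞

structure HasBoundedDistortion (μ : Measure X) (e : Equiv.Perm X) (W : Set X) (K : ℝ≥0∞) :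
    Prop where
  ne_zero : K ≠ 0
  ne_top : K ≠ ∞
  lower : ∀ (k : ℤ) (B : Set X), MeasurableSet B → B ⊆ W →
    K⁻¹ * (μ (⇑(e ^ k) '' W) * μ B) ≤ μ (⇑(e ^ k) '' B) * μ W
  upper : ∀ (k : ℤ) (B : Set X), MeasurableSet B → B ⊆ W →
    μ (⇑(e ^ k) '' B) * μ W ≤ K * (μ (⇑(e ^ k) '' W) * μ B)

namespace IsDissipativeGenerator

theorem measurableSet_block (hX : IsDissipativeGenerator μ e W) (k : ℤ) :
    MeasurableSet (⇑(e ^ k) '' W) :=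
  measurableSet_image_zpow hX.measurable hX.measurable_symm k hX.measurableSet

theorem lintegral_eq_tsum (hX : IsDissipativeGenerator μ e W) (ρ : Measure X) (g : X → ℝ≥0∞) :
    ∫⁻ x, g x ∂ρ = ∑' k : ℤ, ∫⁻ x in ⇑(e ^ k) '' W, g x ∂ρ := by
  rw [← lintegral_iUnion hX.measurableSet_block hX.pairwise_disjoint, hX.iUnion_image_zpow,
    Measure.restrict_univ]

theorem measure_mul_le_of_subset (hX : IsDissipativeGenerator μ e W)
    (hK : HasBoundedDistortion μ e W K) (j m : ℤ) {B : Set X} (hB : MeasurableSet B)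
    (hBj : B ⊆ ⇑(e ^ j) '' W) :
    μ (⇑(e ^ (j + m)) '' W) * μ B ≤ K * K * (μ (⇑(e ^ j) '' W) * μ (⇑(e ^ m) '' B)) := by
  set B₀ := ⇑(e ^ (-j)) '' B
  have hB₀ : MeasurableSet B₀ := measurableSet_image_zpow hX.measurable hX.measurable_symm _ hB
  have hB₀W : B₀ ⊆ W := by
    simpa [B₀, image_zpow_image_zpow] using image_mono (f := ⇑(e ^ (-j))) hBj
  have hjB₀ : ⇑(e ^ j) '' B₀ = B := by simp [B₀]
  have hmB₀ : ⇑(e ^ (j + m)) '' B₀ = ⇑(e ^ m) '' B := by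
    rw [image_zpow_image_zpow]; congr 2; group
  have hW₀ : μ W ≠ 0 := by simpa using hX.measure_ne_zero 0
  have hWT : μ W ≠ ∞ := by simpa using hX.measure_ne_top 0
  have hup := hK.upper j B₀ hB₀ hB₀W
  have hlow := hK.lower (j + m) B₀ hB₀ hB₀W
  rw [hjB₀] at hup
  rw [hmB₀] at hlow
  refine (ENNReal.mul_le_mul_iff_left hW₀ hWT).1 ?_
  calc μ (⇑(e ^ (j + m)) '' W) * μ B * μ W
      = μ (⇑(e ^ (j + m)) '' W) * (μ B * μ W) := mul_assoc _ _ _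
    _ ≤ μ (⇑(e ^ (j + m)) '' W) * (K * (μ (⇑(e ^ j) '' W) * μ B₀)) := by gcongr
    _ = K * μ (⇑(e ^ j) '' W) * (K * (K⁻¹ * (μ (⇑(e ^ (j + m)) '' W) * μ B₀))) := by
      rw [← mul_assoc K K⁻¹, ENNReal.mul_inv_cancel hK.ne_zero hK.ne_top]; ring
    _ ≤ K * μ (⇑(e ^ j) '' W) * (K * (μ (⇑(e ^ m) '' B) * μ W)) := by gcongr
    _ = K * K * (μ (⇑(e ^ j) '' W) * μ (⇑(e ^ m) '' B)) * μ W := by ring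

theorem mul_setLIntegral_le_setLIntegral_map (hX : IsDissipativeGenerator μ e W)
    (hK : HasBoundedDistortion μ e W K) {b : ℝ≥0∞} {j m : ℤ}
    (hb : b * μ (⇑(e ^ j) '' W) ≤ μ (⇑(e ^ (j - m)) '' W)) (g : X → ℝ≥0∞) :
    b * ∫⁻ x in ⇑(e ^ j) '' W, g x ∂μ ≤
      K * K * ∫⁻ x in ⇑(e ^ j) '' W, g x ∂μ.map ⇑(e ^ m) := by
  have hemb := measurableEmbedding_zpow hX.measurable hX.measurable_symm m
  have hle : b • μ.restrict (⇑(e ^ j) '' W) ≤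
      (K * K) • (μ.map ⇑(e ^ m)).restrict (⇑(e ^ j) '' W) := by
    refine Measure.le_intro fun s hs _ => ?_
    set T := s ∩ ⇑(e ^ j) '' W
    have hT := hs.inter (hX.measurableSet_block j)
    rw [Measure.smul_apply, Measure.smul_apply, Measure.restrict_apply hs,
      Measure.restrict_apply hs, hemb.map_apply, smul_eq_mul, smul_eq_mul]
    refine (ENNReal.mul_le_mul_iff_right (hX.measure_ne_zero j) (hX.measure_ne_top j)).1 ?_
    calc μ (⇑(e ^ j) '' W) * (b * μ T) = b * μ (⇑(e ^ j) '' W) * μ T := by ring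
      _ ≤ μ (⇑(e ^ (j + -m)) '' W) * μ T := by rw [← sub_eq_add_neg]; gcongr
      _ ≤ K * K * (μ (⇑(e ^ j) '' W) * μ (⇑(e ^ (-m)) '' T)) :=
        hX.measure_mul_le_of_subset hK j (-m) hT inter_subset_right
      _ = μ (⇑(e ^ j) '' W) * (K * K * μ (⇑(e ^ m) ⁻¹' T)) := by
        rw [image_zpow_eq_preimage (-m), neg_neg]; ring
  simpa only [lintegral_smul_measure, smul_eq_mul] using lintegral_mono' hle le_rfl

theorem mul_tsum_setLIntegral_le_lintegral_comp (hX : IsDissipativeGenerator μ e W)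
    (hK : HasBoundedDistortion μ e W K) {b : ℝ≥0∞} {m : ℤ} {Z : Set ℤ}
    (hZ : ∀ j ∈ Z, b * μ (⇑(e ^ j) '' W) ≤ μ (⇑(e ^ (j - m)) '' W)) (g : X → ℝ≥0∞) :
    b * ∑' j : Z, ∫⁻ x in ⇑(e ^ (j : ℤ)) '' W, g x ∂μ ≤ K * K * ∫⁻ x, g ((e ^ m) x) ∂μ := by
  set ν := μ.map ⇑(e ^ m)
  calc b * ∑' j : Z, ∫⁻ x in ⇑(e ^ (j : ℤ)) '' W, g x ∂μ
      = ∑' j : Z, b * ∫⁻ x in ⇑(e ^ (j : ℤ)) '' W, g x ∂μ := ENNReal.tsum_mul_left.symm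
    _ ≤ ∑' j : Z, K * K * ∫⁻ x in ⇑(e ^ (j : ℤ)) '' W, g x ∂ν :=
      ENNReal.tsum_le_tsum fun j => hX.mul_setLIntegral_le_setLIntegral_map hK (hZ j j.2) g
    _ ≤ ∑' j : ℤ, K * K * ∫⁻ x in ⇑(e ^ j) '' W, g x ∂ν :=
      ENNReal.tsum_comp_le_tsum_of_injective Subtype.val_injective _
    _ = K * K * ∫⁻ x, g ((e ^ m) x) ∂μ := by
      rw [ENNReal.tsum_mul_left, ← hX.lintegral_eq_tsum,
        (measurableEmbedding_zpow hX.measurable hX.measurable_symm m).lintegral_map]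

end IsDissipativeGenerator

end Dissipative

section Expansive

variable {X : Type*} [MeasurableSpace X] {μ : Measure X} {p : ℝ≥0∞} {e : Equiv.Perm X}
  {W : Set X} {K : ℝ≥0∞}

noncomputable def normalizedIndicator (μ : Measure X) (q : ℝ) (S : Set X) : X → ℂ :=
  S.indicator fun _ => ((μ S ^ (-q⁻¹)).toReal : ℂ)

theorem eLpNorm_normalizedIndicator_comp (hp₀ : p ≠ 0) (hp : p ≠ ∞) {S : Set X}
    (hS : MeasurableSet S) (hS₀ : μ S ≠ 0) (hST : μ S ≠ ∞) {g : X → X} (hg : Measurable g) :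
    eLpNorm (normalizedIndicator μ p.toReal S ∘ g) p μ = (μ (g ⁻¹' S) / μ S) ^ p.toReal⁻¹ := by
  have hcomp : normalizedIndicator μ p.toReal S ∘ g =
      (g ⁻¹' S).indicator fun _ => ((μ S ^ (-p.toReal⁻¹)).toReal : ℂ) :=
    rfl
  have hc : μ S ^ (-p.toReal⁻¹) ≠ ∞ := rpow_ne_top_of_ne_zero hS₀ hST
  rw [hcomp, eLpNorm_indicator_const (hg hS) hp₀ hp, ← enorm_norm, Complex.norm_real,
    Real.norm_of_nonneg toReal_nonneg, Real.enorm_of_nonneg toReal_nonneg, ofReal_toReal hc,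
    div_rpow_of_nonneg _ _ (by positivity), rpow_neg, one_div, div_eq_mul_inv, mul_comm]

theorem normalizedIndicator_mem_sphere (hp₀ : p ≠ 0) (hp : p ≠ ∞) {S : Set X}
    (hS : MeasurableSet S) (hS₀ : μ S ≠ 0) (hST : μ S ≠ ∞) :
    MemLp (normalizedIndicator μ p.toReal S) p μ ∧
      eLpNorm (normalizedIndicator μ p.toReal S) p μ = 1 := by
  have h := eLpNorm_normalizedIndicator_comp hp₀ hp hS hS₀ hST measurable_id
  rw [Function.comp_id, preimage_id, ENNReal.div_self hS₀ hST, one_rpow] at h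
  exact ⟨⟨(measurable_const.indicator hS).aestronglyMeasurable, h ▸ one_lt_top⟩, h⟩

theorem lintegral_rpow_enorm_eq_one {E : Type*} [NormedAddCommGroup E] (hp₀ : p ≠ 0)
    (hp : p ≠ ∞) {φ : X → E} (hφ : eLpNorm φ p μ = 1) :
    ∫⁻ x, ‖φ x‖ₑ ^ p.toReal ∂μ = 1 := by
  rw [eLpNorm_eq_lintegral_rpow_enorm_toReal hp₀ hp] at hφ
  exact rpow_left_injective (one_div_ne_zero (toReal_pos hp₀ hp).ne') (by simpa using hφ)

def IsUniformlyExpansive (μ : Measure X) (p : ℝ≥0∞) (e : Equiv.Perm X) : Prop :=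
  ∃ A C : Set (X → ℂ), {φ : X → ℂ | MemLp φ p μ ∧ eLpNorm φ p μ = 1} = A ∪ C ∧
    ∀ M : ℝ≥0∞, M ≠ ∞ → ∃ N : ℕ, ∀ n ≥ N,
      (∀ φ ∈ A, M ≤ eLpNorm (φ ∘ ⇑(e ^ (n : ℤ))) p μ) ∧
      (∀ φ ∈ C, M ≤ eLpNorm (φ ∘ ⇑(e ^ (-(n : ℤ)))) p μ)

noncomputable def blockMass (μ : Measure X) (e : Equiv.Perm X) (W : Set X) (q : ℝ) (Z : Set ℤ)
    (φ : X → ℂ) : ℝ≥0∞ :=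
  ∑' j : Z, ∫⁻ x in ⇑(e ^ (j : ℤ)) '' W, ‖φ x‖ₑ ^ q ∂μ

namespace IsDissipativeGenerator

theorem blockMass_add_blockMass_compl (hX : IsDissipativeGenerator μ e W) (q : ℝ) (Z : Set ℤ)
    (φ : X → ℂ) :
    blockMass μ e W q Z φ + blockMass μ e W q Zᶜ φ = ∫⁻ x, ‖φ x‖ₑ ^ q ∂μ := by
  rw [hX.lintegral_eq_tsum]
  exact ENNReal.summable.tsum_add_tsum_compl
    (f := fun j : ℤ => ∫⁻ x in ⇑(e ^ j) '' W, ‖φ x‖ₑ ^ q ∂μ) ENNReal.summable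

theorem inv_two_le_blockMass_or (hX : IsDissipativeGenerator μ e W) (hp₀ : p ≠ 0) (hp : p ≠ ∞)
    {φ : X → ℂ} (hφ : eLpNorm φ p μ = 1) (Z : Set ℤ) :
    2⁻¹ ≤ blockMass μ e W p.toReal Z φ ∨ 2⁻¹ ≤ blockMass μ e W p.toReal Zᶜ φ := by
  by_contra! h
  have := ENNReal.add_lt_add h.1 h.2
  rw [hX.blockMass_add_blockMass_compl, lintegral_rpow_enorm_eq_one hp₀ hp hφ,
    inv_two_add_inv_two] at this
  exact lt_irrefl _ this

theorem eventually_le_eLpNorm_comp (hX : IsDissipativeGenerator μ e W)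
    (hK : HasBoundedDistortion μ e W K) (hp₀ : p ≠ 0) (hp : p ≠ ∞) {d : ℤ} {Z : Set ℤ}
    (hZ : ExpandsUniformlyOn (fun k => μ (⇑(e ^ k) '' W)) d Z) {M : ℝ≥0∞} (hM : M ≠ ∞) :
    ∀ᶠ n : ℕ in atTop, ∀ φ : X → ℂ, 2⁻¹ ≤ blockMass μ e W p.toReal Z φ →
      M ≤ eLpNorm (φ ∘ ⇑(e ^ (-(d * n)))) p μ := by
  have hq := toReal_pos hp₀ hp
  have hKK₀ : K * K ≠ 0 := mul_ne_zero hK.ne_zero hK.ne_zero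
  have hKKT : K * K ≠ ∞ := mul_ne_top hK.ne_top hK.ne_top
  filter_upwards [hZ (K * K * 2 * M ^ p.toReal) (by finiteness)] with n hn φ hφ
  rw [eLpNorm_eq_lintegral_rpow_enorm_toReal hp₀ hp, one_div, le_rpow_inv_iff hq]
  have hcore := hX.mul_tsum_setLIntegral_le_lintegral_comp hK (m := -(d * n))
    (fun j hj => by rw [sub_neg_eq_add]; exact hn j hj) fun x => ‖φ x‖ₑ ^ p.toReal
  refine (ENNReal.mul_le_mul_iff_right hKK₀ hKKT).1 (le_trans ?_ hcore)
  calc K * K * M ^ p.toReal = K * K * M ^ p.toReal * (2 * 2⁻¹) := by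
        rw [ENNReal.mul_inv_cancel two_ne_zero ofNat_ne_top, mul_one]
    _ = K * K * 2 * M ^ p.toReal * 2⁻¹ := by ring
    _ ≤ K * K * 2 * M ^ p.toReal * blockMass μ e W p.toReal Z φ := by gcongr

theorem isUniformlyExpansive_of_expandsUniformlyOn (hX : IsDissipativeGenerator μ e W)
    (hK : HasBoundedDistortion μ e W K) (hp₀ : p ≠ 0) (hp : p ≠ ∞) {Z : Set ℤ}
    (hZ : ExpandsUniformlyOn (fun k => μ (⇑(e ^ k) '' W)) (-1) Z)
    (hZc : ExpandsUniformlyOn (fun k => μ (⇑(e ^ k) '' W)) 1 Zᶜ) :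
    IsUniformlyExpansive μ p e := by
  refine ⟨{φ | (MemLp φ p μ ∧ eLpNorm φ p μ = 1) ∧ 2⁻¹ ≤ blockMass μ e W p.toReal Z φ},
    {φ | (MemLp φ p μ ∧ eLpNorm φ p μ = 1) ∧ 2⁻¹ ≤ blockMass μ e W p.toReal Zᶜ φ}, ?_,
    fun M hM => ?_⟩
  · ext φ
    simp only [mem_ofPred_eq, mem_union, ← and_or_left]
    exact ⟨fun h => ⟨h, hX.inv_two_le_blockMass_or hp₀ hp h.2 Z⟩, And.left⟩
  · obtain ⟨N, hN⟩ := eventually_atTop.1 <|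
      (hX.eventually_le_eLpNorm_comp hK hp₀ hp hZ hM).and
        (hX.eventually_le_eLpNorm_comp hK hp₀ hp hZc hM)
    refine ⟨N, fun n hn => ⟨fun φ hφ => ?_, fun φ hφ => ?_⟩⟩
    · simpa using (hN n hn).1 φ hφ.2
    · simpa using (hN n hn).2 φ hφ.2

theorem expandsUniformlyOn_of_le_eLpNorm_comp (hX : IsDissipativeGenerator μ e W)
    (hp₀ : p ≠ 0) (hp : p ≠ ∞) {d : ℤ} {S : Set ℤ}
    (h : ∀ M ≠ ∞, ∀ᶠ n : ℕ in atTop, ∀ k ∈ S,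
      M ≤ eLpNorm (normalizedIndicator μ p.toReal (⇑(e ^ k) '' W) ∘ ⇑(e ^ (-(d * n)))) p μ) :
    ExpandsUniformlyOn (fun k => μ (⇑(e ^ k) '' W)) d S := by
  have hq := toReal_pos hp₀ hp
  intro b hb
  filter_upwards [h (b ^ p.toReal⁻¹) (rpow_ne_top_of_nonneg (by positivity) hb)] with n hn k hk
  have hk := hn k hk
  rwa [eLpNorm_normalizedIndicator_comp hp₀ hp (hX.measurableSet_block k)
    (hX.measure_ne_zero k) (hX.measure_ne_top k)
    (measurable_zpow_s9 hX.measurable hX.measurable_symm _), preimage_zpow_image_zpow,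
    sub_neg_eq_add, rpow_le_rpow_iff (inv_pos.2 hq),
    ENNReal.le_div_iff_mul_le (Or.inl (hX.measure_ne_zero k)) (Or.inl (hX.measure_ne_top k))] at hk

theorem exists_expandsUniformlyOn_of_isUniformlyExpansive (hX : IsDissipativeGenerator μ e W)
    (hp₀ : p ≠ 0) (hp : p ≠ ∞) (h : IsUniformlyExpansive μ p e) :
    ∃ Z : Set ℤ, ExpandsUniformlyOn (fun k => μ (⇑(e ^ k) '' W)) (-1) Z ∧
      ExpandsUniformlyOn (fun k => μ (⇑(e ^ k) '' W)) 1 Zᶜ := by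
  obtain ⟨A, C, hsplit, hU⟩ := h
  have hsphere (k : ℤ) : normalizedIndicator μ p.toReal (⇑(e ^ k) '' W) ∈ A ∪ C :=
    hsplit ▸ normalizedIndicator_mem_sphere hp₀ hp (hX.measurableSet_block k)
      (hX.measure_ne_zero k) (hX.measure_ne_top k)
  refine ⟨{k | normalizedIndicator μ p.toReal (⇑(e ^ k) '' W) ∈ A},
    hX.expandsUniformlyOn_of_le_eLpNorm_comp hp₀ hp fun M hM => ?_,
    hX.expandsUniformlyOn_of_le_eLpNorm_comp hp₀ hp fun M hM => ?_⟩ <;>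
  obtain ⟨N, hN⟩ := hU M hM <;>
  filter_upwards [eventually_ge_atTop N] with n hn k hk
  · simpa using (hN n hn).1 _ hk
  · simpa using (hN n hn).2 _ ((hsphere k).resolve_left hk)

end IsDissipativeGenerator

end Expansive

theorem stmt_9_general
    {X : Type*} [MeasurableSpace X] (μ : MeasureTheory.Measure X)
    (p : ℝ≥0∞) (hp1 : 1 ≤ p) (hpT : p ≠ ⊤)
    (e : Equiv.Perm X) (he : Measurable e) (he' : Measurable e.symm)
    (c c' : ℝ≥0∞) (hcT : c ≠ ⊤) (hc'T : c' ≠ ⊤)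
    (hb : ∀ B : Set X, MeasurableSet B → μ (⇑e ⁻¹' B) ≤ c * μ B)
    (hb' : ∀ B : Set X, MeasurableSet B → μ (⇑e '' B) ≤ c' * μ B)
    (W : Set X) (hWm : MeasurableSet W) (hW0 : 0 < μ W) (hWfin : μ W ≠ ⊤)
    (hcover : (⋃ k : ℤ, ⇑(e ^ k) '' W) = Set.univ)
    (hdisj : Pairwise (fun k l : ℤ => Disjoint (⇑(e ^ k) '' W) (⇑(e ^ l) '' W)))
    (K : ℝ≥0∞) (hK0 : 0 < K) (hKT : K ≠ ⊤)
    (hbd : ∀ (k : ℤ) (B : Set X), MeasurableSet B → B ⊆ W →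
        K⁻¹ * (μ (⇑(e ^ k) '' W) * μ B) ≤ μ (⇑(e ^ k) '' B) * μ W ∧
        μ (⇑(e ^ k) '' B) * μ W ≤ K * (μ (⇑(e ^ k) '' W) * μ B)) :
    -- uniform expansivity: the unit sphere of `L^p` splits as `𝓐 ∪ 𝓒`
    (∃ A C : Set (X → ℂ),
        {φ : X → ℂ | MemLp φ p μ ∧ eLpNorm φ p μ = 1} = A ∪ C ∧
        (∀ M : ℝ≥0∞, M ≠ ⊤ → ∃ N : ℕ, ∀ n ≥ N,
          (∀ φ ∈ A, M ≤ eLpNorm (φ ∘ ⇑(e ^ (n : ℤ))) p μ) ∧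
          (∀ φ ∈ C, M ≤ eLpNorm (φ ∘ ⇑(e ^ (-(n : ℤ)))) p μ))) ↔
    -- UE1 ∨ UE2 ∨ UE3
    (Filter.Tendsto
        (fun n : ℕ => ⨅ k : ℤ, μ (⇑(e ^ (k + (n : ℤ))) '' W) / μ (⇑(e ^ k) '' W))
        Filter.atTop (nhds ⊤) ∨
     Filter.Tendsto
        (fun n : ℕ => ⨅ k : ℤ, μ (⇑(e ^ (k - (n : ℤ))) '' W) / μ (⇑(e ^ k) '' W))
        Filter.atTop (nhds ⊤) ∨
     (Filter.Tendsto
        (fun n : ℕ => ⨅ k ∈ Set.Ici (1 : ℤ),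
          μ (⇑(e ^ (k + (n : ℤ))) '' W) / μ (⇑(e ^ k) '' W))
        Filter.atTop (nhds ⊤) ∧
      Filter.Tendsto
        (fun n : ℕ => ⨅ k ∈ Set.Iic (0 : ℤ),
          μ (⇑(e ^ (k - (n : ℤ))) '' W) / μ (⇑(e ^ k) '' W))
        Filter.atTop (nhds ⊤))) := by
  have hp₀ : p ≠ 0 := (zero_lt_one.trans_le hp1).ne'
  have hsteps := hasBoundedSteps_measure_image_zpow (μ := μ) he he' hWm hb hb'
  have hC : max c c' ≠ ∞ := max_ne_top hcT hc'T
  have hX : IsDissipativeGenerator μ e W :=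
    { measurable := he
      measurable_symm := he'
      measurableSet := hWm
      iUnion_image_zpow := hcover
      pairwise_disjoint := hdisj
      measure_ne_zero := hsteps.ne_zero (k₀ := 0) (by simpa using hW0.ne')
      measure_ne_top := hsteps.ne_top hC (k₀ := 0) (by simpa using hWfin) }
  have hK : HasBoundedDistortion μ e W K :=
    ⟨hK0.ne', hKT, fun k B hB hBW => (hbd k B hB hBW).1, fun k B hB hBW => (hbd k B hB hBW).2⟩
  have hUE := tendsto_iInf_div_iff_expandsUniformlyOn hX.measure_ne_zero hX.measure_ne_top
  have hUE1 := hUE 1 univ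
  have hUE2 := hUE (-1) univ
  have hUE3a := hUE 1 (Ici 1)
  have hUE3b := hUE (-1) (Iic 0)
  simp only [iInf_univ, one_mul, neg_one_mul, ← sub_eq_add_neg] at hUE1 hUE2 hUE3a hUE3b
  rw [hUE1, hUE2, hUE3a, hUE3b,
    ← exists_expandsUniformlyOn_iff hsteps hC hX.measure_ne_zero hX.measure_ne_top]
  exact ⟨hX.exists_expandsUniformlyOn_of_isUniformlyExpansive hp₀ hpT,
    fun ⟨_, hZ, hZc⟩ => hX.isUniformlyExpansive_of_expandsUniformlyOn hK hp₀ hpT hZ hZc⟩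

/-- Theorem ED(4): for a dissipative composition dynamical system of bounded
distortion generated by `W`, with `T_f` invertible, `T_f` is uniformly
expansive iff one of the conditions UE1, UE2, UE3 holds. -/
theorem stmt_9
    {X : Type*} [MeasurableSpace X] (μ : MeasureTheory.Measure X) [MeasureTheory.SigmaFinite μ]
    (p : ℝ≥0∞) (hp1 : 1 ≤ p) (hpT : p ≠ ⊤)
    (e : Equiv.Perm X) (he : Measurable e) (he' : Measurable e.symm)
    (c c' : ℝ≥0∞) (hc : 0 < c) (hcT : c ≠ ⊤) (hc' : 0 < c') (hc'T : c' ≠ ⊤)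
    (hb : ∀ B : Set X, MeasurableSet B → μ (⇑e ⁻¹' B) ≤ c * μ B)
    (hb' : ∀ B : Set X, MeasurableSet B → μ (⇑e '' B) ≤ c' * μ B)
    (W : Set X) (hWm : MeasurableSet W) (hW0 : 0 < μ W) (hWfin : μ W ≠ ⊤)
    (hcover : (⋃ k : ℤ, ⇑(e ^ k) '' W) = Set.univ)
    (hdisj : Pairwise (fun k l : ℤ => Disjoint (⇑(e ^ k) '' W) (⇑(e ^ l) '' W)))
    (K : ℝ≥0∞) (hK0 : 0 < K) (hKT : K ≠ ⊤)
    (hbd : ∀ (k : ℤ) (B : Set X), MeasurableSet B → B ⊆ W →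
        K⁻¹ * (μ (⇑(e ^ k) '' W) * μ B) ≤ μ (⇑(e ^ k) '' B) * μ W ∧
        μ (⇑(e ^ k) '' B) * μ W ≤ K * (μ (⇑(e ^ k) '' W) * μ B)) :
    -- uniform expansivity: the unit sphere of `L^p` splits as `𝓐 ∪ 𝓒`
    (∃ A C : Set (X → ℂ),
        {φ : X → ℂ | MemLp φ p μ ∧ eLpNorm φ p μ = 1} = A ∪ C ∧
        (∀ M : ℝ≥0∞, M ≠ ⊤ → ∃ N : ℕ, ∀ n ≥ N,
          (∀ φ ∈ A, M ≤ eLpNorm (φ ∘ ⇑(e ^ (n : ℤ))) p μ) ∧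
          (∀ φ ∈ C, M ≤ eLpNorm (φ ∘ ⇑(e ^ (-(n : ℤ)))) p μ))) ↔
    -- UE1 ∨ UE2 ∨ UE3
    (Filter.Tendsto
        (fun n : ℕ => ⨅ k : ℤ, μ (⇑(e ^ (k + (n : ℤ))) '' W) / μ (⇑(e ^ k) '' W))
        Filter.atTop (nhds ⊤) ∨
     Filter.Tendsto
        (fun n : ℕ => ⨅ k : ℤ, μ (⇑(e ^ (k - (n : ℤ))) '' W) / μ (⇑(e ^ k) '' W))
        Filter.atTop (nhds ⊤) ∨
     (Filter.Tendsto
        (fun n : ℕ => ⨅ k ∈ Set.Ici (1 : ℤ),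
          μ (⇑(e ^ (k + (n : ℤ))) '' W) / μ (⇑(e ^ k) '' W))
        Filter.atTop (nhds ⊤) ∧
      Filter.Tendsto
        (fun n : ℕ => ⨅ k ∈ Set.Iic (0 : ℤ),
          μ (⇑(e ^ (k - (n : ℤ))) '' W) / μ (⇑(e ^ k) '' W))
        Filter.atTop (nhds ⊤))) :=
  stmt_9_general μ p hp1 hpT e he he' c c' hcT hc'T hb hb' W hWm hW0 hWfin hcover hdisj K hK0 hKT
    hbd
end
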